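/- Two non-real split quaternions a, b ∈ ℍₛ are similar — i.e. there exists q ∈ ℍₛ with I_q ≠ 0 and q a = b q — if and only if Re(a) = Re(b) and K(a) = K(b). -/

import Mathlib

open Quaternion

/-- The split quaternions: `ℍ[ℝ, -1, 1]`. -/
abbrev SplitQuaternion : Type := ℍ[ℝ, -1, 1]

/-- `I_q = q * q̄ = q₀² + q₁² − q₂² − q₃²`, as a real scalar. -/
def Iq (q : SplitQuaternion) : ℝ := q.re ^ 2 + q.imI ^ 2 - q.imJ ^ 2 - q.imK ^ 2

/-- `K(q) = −q₁² + q₂² + q₃²`. -/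
def Kq (q : SplitQuaternion) : ℝ := -q.imI ^ 2 + q.imJ ^ 2 + q.imK ^ 2

/-!
`Re` and the multiplicative norm `I` are invariant under conjugation, and `K = Re² − I`.
Conversely, the square of a pure imaginary split quaternion `u` is the real scalar `K(u)`, so
when `Im a` and `Im b` have the same square, `b.im * c + c * a.im` intertwines `a` and `b` for
every `c`. Testing `c = 1, i, j, k`, one of these is invertible: otherwise `K(a) = K(b) = 0` and
`a₁ b₁ = 0`, whereas a nonzero imaginary part with `K = 0` has `q₁ ≠ 0`.
-/

lemma QuaternionAlgebra.re_mul_comm {R : Type*} [CommRing R] {c₁ c₃ : R}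
    (p q : ℍ[R, c₁, 0, c₃]) : (p * q).re = (q * p).re := by
  simp only [re_mul]; ring

lemma intertwiner_mul_of_sq_comm {R : Type*} [Ring R] {u v c : R} (h : c * (u * u) = v * v * c) :
    (v * c + c * u) * u = v * (v * c + c * u) := by
  rw [add_mul, mul_add, mul_assoc c, h, add_comm]
  simp only [mul_assoc]

namespace SplitQuaternion

open QuaternionAlgebra

lemma mul_star_eq_Iq (q : SplitQuaternion) : q * star q = (Iq q : SplitQuaternion) := by
  ext <;> simp only [re_coe, imI_coe, imJ_coe, imK_coe] <;> simp [Iq] <;> ring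

lemma star_mul_eq_Iq (q : SplitQuaternion) : star q * q = (Iq q : SplitQuaternion) := by
  ext <;> simp only [re_coe, imI_coe, imJ_coe, imK_coe] <;> simp [Iq] <;> ring

lemma Iq_mul (p q : SplitQuaternion) : Iq (p * q) = Iq p * Iq q := by
  simp [Iq]; ring

lemma im_mul_im (a : SplitQuaternion) : a.im * a.im = (Kq a : SplitQuaternion) := by
  ext <;> simp only [re_coe, imI_coe, imJ_coe, imK_coe] <;> simp [Kq] <;> ring

lemma re_mul_coe (a : SplitQuaternion) (r : ℝ) : (a * r).re = r * a.re := by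
  rw [QuaternionAlgebra.mul_coe_eq_smul, QuaternionAlgebra.re_smul, smul_eq_mul]

lemma Kq_eq_re_sq_sub_Iq (a : SplitQuaternion) : Kq a = a.re ^ 2 - Iq a := by
  unfold Kq Iq; ring

lemma re_eq_of_mul_eq_mul {a b q : SplitQuaternion} (hq : Iq q ≠ 0) (h : q * a = b * q) :
    a.re = b.re := by
  refine mul_left_cancel₀ hq ?_
  calc Iq q * a.re = (a * (star q * q)).re := by rw [star_mul_eq_Iq, re_mul_coe]
    _ = (q * a * star q).re := by rw [← mul_assoc, re_mul_comm, mul_assoc]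
    _ = Iq q * b.re := by rw [h, mul_assoc, mul_star_eq_Iq, re_mul_coe]

lemma Iq_eq_of_mul_eq_mul {a b q : SplitQuaternion} (hq : Iq q ≠ 0) (h : q * a = b * q) :
    Iq a = Iq b := by
  refine mul_left_cancel₀ hq ?_
  rw [← Iq_mul, h, Iq_mul, mul_comm]

def intertwiner (a b c : SplitQuaternion) : SplitQuaternion := b.im * c + c * a.im

lemma intertwiner_mul {a b : SplitQuaternion} (hre : a.re = b.re) (hK : Kq a = Kq b)
    (c : SplitQuaternion) : intertwiner a b c * a = b * intertwiner a b c := by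
  have hsq : c * (a.im * a.im) = b.im * b.im * c := by
    rw [im_mul_im, im_mul_im, hK, coe_commutes]
  unfold intertwiner
  calc (b.im * c + c * a.im) * a = (b.im * c + c * a.im) * (b.re + a.im) := by
        rw [← hre, QuaternionAlgebra.re_add_im]
    _ = (b.re + b.im) * (b.im * c + c * a.im) := by
        rw [mul_add, add_mul (b.re : SplitQuaternion), intertwiner_mul_of_sq_comm hsq, coe_commutes]
    _ = b * (b.im * c + c * a.im) := by rw [QuaternionAlgebra.re_add_im]

lemma sum_Iq_intertwiner_basis (a b : SplitQuaternion) :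
    Iq (intertwiner a b 1) + Iq (intertwiner a b ⟨0, 1, 0, 0⟩) + Iq (intertwiner a b ⟨0, 0, 1, 0⟩)
      + Iq (intertwiner a b ⟨0, 0, 0, 1⟩) = 8 * (a.imI * b.imI) := by
  simp [Iq, intertwiner]; ring

lemma signed_sum_Iq_intertwiner_basis (a b : SplitQuaternion) :
    -Iq (intertwiner a b 1) - Iq (intertwiner a b ⟨0, 1, 0, 0⟩) + Iq (intertwiner a b ⟨0, 0, 1, 0⟩)
      + Iq (intertwiner a b ⟨0, 0, 0, 1⟩) = 4 * (Kq a + Kq b) := by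
  simp [Iq, Kq, intertwiner]; ring

lemma imI_ne_zero_of_Kq_eq_zero {a : SplitQuaternion} (ha : a.im ≠ 0) (hK : Kq a = 0) :
    a.imI ≠ 0 := by
  intro hI
  have hJK : a.imJ ^ 2 + a.imK ^ 2 = 0 := by unfold Kq at hK; rw [hI] at hK; linarith
  obtain ⟨hJ, hK'⟩ := (add_eq_zero_iff_of_nonneg (sq_nonneg _) (sq_nonneg _)).mp hJK
  exact ha (by ext <;> simp_all)

lemma exists_Iq_intertwiner_ne_zero {a b : SplitQuaternion} (ha : a.im ≠ 0) (hb : b.im ≠ 0)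
    (hK : Kq a = Kq b) : ∃ c, Iq (intertwiner a b c) ≠ 0 := by
  by_contra! h
  have hsum := sum_Iq_intertwiner_basis a b
  have hsigned := signed_sum_Iq_intertwiner_basis a b
  simp only [h, add_zero, neg_zero, sub_zero] at hsum hsigned
  have hKa : Kq a = 0 := by linarith
  have hKb : Kq b = 0 := by linarith
  exact mul_ne_zero (imI_ne_zero_of_Kq_eq_zero ha hKa) (imI_ne_zero_of_Kq_eq_zero hb hKb)
    (by linarith)

end SplitQuaternion

open SplitQuaternion

/-- Two non-real split quaternions `a, b` are similar (`q a = b q` for some invertible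
`q`, i.e. with `I_q ≠ 0`) if and only if `Re a = Re b` and `K(a) = K(b)`. -/
theorem similar_iff (a b : SplitQuaternion) (ha : a.im ≠ 0) (hb : b.im ≠ 0) :
    (∃ q : SplitQuaternion, Iq q ≠ 0 ∧ q * a = b * q) ↔ (a.re = b.re ∧ Kq a = Kq b) := by
  constructor
  · rintro ⟨q, hq, h⟩
    have hre := re_eq_of_mul_eq_mul hq h
    refine ⟨hre, ?_⟩
    rw [Kq_eq_re_sq_sub_Iq, Kq_eq_re_sq_sub_Iq, hre, Iq_eq_of_mul_eq_mul hq h]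
  · rintro ⟨hre, hK⟩
    obtain ⟨c, hc⟩ := exists_Iq_intertwiner_ne_zero ha hb hK
    exact ⟨intertwiner a b c, hc, intertwiner_mul hre hK c⟩
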